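/- Let Γ_1, …, Γ_L be d×d complex matrices that are both Hermitian and unitary, let η_1, …, η_L be real numbers, let t ∈ ℝ and let r be a positive integer. Set U = exp(−it ∑_{j=1}^{L} η_j Γ_j) and V = ( ∏_{j=1}^{L} exp(−i (t/r) η_j Γ_j) )^r. Then for every unit vector ψ ∈ ℂ^d and every d×d matrix M with 0 ≤ M ≤ I, the probabilities P_U = ⟨Uψ, M (Uψ)⟩ and P_V = ⟨Vψ, M (Vψ)⟩ satisfy |P_U − P_V| ≤ 2 ((L |t| max_j|η_j|)² / r) · exp(L max_j|η_j| |t| / r). -/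

import Mathlib

/-!
Put `z = -i t / r`, `Hⱼ = ηⱼ Γⱼ` and `H = ∑ⱼ Hⱼ`, so that `U = exp (z H) ^ r` and `V = S ^ r`, where
`S = ∏ⱼ exp (z Hⱼ)` is one Trotter step. Both `exp (z H)` and `S` are unitary and agree with
`1 + z H` up to a remainder bounded by the scalar majorant `g(s) = eˢ - 1 - s` at
`s = ∑ⱼ ‖z Hⱼ‖ ≤ L |t| maxⱼ |ηⱼ| / r`. So one step has error `≤ 2 g(s) ≤ s² eˢ`, and since all the
factors are contractions the errors of the `r` steps simply add up. Finally
`⟨u, M u⟩ - ⟨v, M v⟩ = ⟨u, M (u - v)⟩ + ⟨u - v, M v⟩` and `‖M‖ ≤ 1` contribute the factor `2`.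
-/

open Matrix NormedSpace
open scoped Matrix.Norms.L2Operator ComplexOrder Nat

theorem Real.hasSum_pow_add_two_div_factorial (a : ℝ) :
    HasSum (fun n : ℕ => a ^ (n + 2) / (n + 2)!) (Real.exp a - 1 - a) := by
  have h := (hasSum_nat_add_iff' 2).mpr (expSeries_div_hasSum_exp a)
  simpa [Real.exp_eq_exp_ℝ, Finset.sum_range_succ, sub_sub] using h

theorem Real.exp_sub_one_sub_le {a : ℝ} (ha : 0 ≤ a) :
    Real.exp a - 1 - a ≤ a ^ 2 / 2 * Real.exp a := by
  have hexp : HasSum (fun n : ℕ => a ^ 2 / 2 * (a ^ n / n !)) (a ^ 2 / 2 * Real.exp a) := by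
    simpa [Real.exp_eq_exp_ℝ] using (expSeries_div_hasSum_exp a).mul_left (a ^ 2 / 2)
  refine hasSum_le (fun n => ?_) (Real.hasSum_pow_add_two_div_factorial a) hexp
  have hfac : (n ! * 2 : ℝ) ≤ (n + 2)! := by
    exact_mod_cast Nat.le_of_dvd (Nat.factorial_pos _)
      (Nat.factorial_mul_factorial_dvd_factorial_add n 2)
  calc a ^ (n + 2) / (n + 2)! ≤ a ^ (n + 2) / (n ! * 2) := by gcongr
    _ = a ^ 2 / 2 * (a ^ n / n !) := by ring

theorem norm_pow_sub_pow_le {R : Type*} [NormedRing R] {a b : R} (ha : ‖a‖ ≤ 1) (hb : ‖b‖ ≤ 1)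
    (n : ℕ) : ‖a ^ n - b ^ n‖ ≤ n * ‖a - b‖ := by
  induction n with
  | zero => simp
  | succ n ih =>
    have hlead : ‖a ^ n * (a - b)‖ ≤ ‖a - b‖ := by
      rcases n.eq_zero_or_pos with rfl | hn
      · simp
      · exact (norm_mul_le _ _).trans <| mul_le_of_le_one_left (norm_nonneg _) <|
          (norm_pow_le' a hn).trans (pow_le_one₀ (norm_nonneg a) ha)
    have htail : ‖(a ^ n - b ^ n) * b‖ ≤ n * ‖a - b‖ :=
      (norm_mul_le _ _).trans <| (mul_le_of_le_one_right (norm_nonneg _) hb).trans ih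
    calc ‖a ^ (n + 1) - b ^ (n + 1)‖ = ‖a ^ n * (a - b) + (a ^ n - b ^ n) * b‖ := by
          congr 1; noncomm_ring
      _ ≤ ‖a - b‖ + n * ‖a - b‖ := (norm_add_le _ _).trans (add_le_add hlead htail)
      _ = (n + 1 : ℕ) * ‖a - b‖ := by push_cast; ring

section BanachAlgebra

variable {𝔸 : Type*} [NormedRing 𝔸] [NormedAlgebra ℚ 𝔸] [CompleteSpace 𝔸]

theorem NormedSpace.hasSum_exp_sub_one_sub (x : 𝔸) :
    HasSum (fun n : ℕ => ((n + 2)! : ℚ)⁻¹ • x ^ (n + 2)) (exp x - 1 - x) := by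
  have h := (hasSum_nat_add_iff' 2).mpr (exp_series_hasSum_exp' (𝕂 := ℚ) x)
  simpa [Finset.sum_range_succ, sub_sub] using h

theorem NormedSpace.norm_exp_sub_one_sub_le (x : 𝔸) :
    ‖exp x - 1 - x‖ ≤ Real.exp ‖x‖ - 1 - ‖x‖ := by
  rw [← (hasSum_exp_sub_one_sub x).tsum_eq]
  refine tsum_of_norm_bounded (Real.hasSum_pow_add_two_div_factorial ‖x‖) fun n => ?_
  rw [norm_smul, div_eq_inv_mul]
  gcongr
  · rw [norm_inv, ← Rat.norm_cast_real]
    simp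
  · exact norm_pow_le' x (Nat.succ_pos _)

theorem NormedSpace.norm_exp_sub_one_le (x : 𝔸) : ‖exp x - 1‖ ≤ Real.exp ‖x‖ - 1 := by
  calc ‖exp x - 1‖ = ‖(exp x - 1 - x) + x‖ := by rw [sub_add_cancel]
    _ ≤ ‖exp x - 1 - x‖ + ‖x‖ := norm_add_le _ _
    _ ≤ Real.exp ‖x‖ - 1 := by linarith [norm_exp_sub_one_sub_le x]

theorem NormedSpace.norm_exp_sub_one_sub_le_sq_mul_exp (x : 𝔸) :
    ‖exp x - 1 - x‖ ≤ ‖x‖ ^ 2 / 2 * Real.exp ‖x‖ :=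
  (norm_exp_sub_one_sub_le x).trans (Real.exp_sub_one_sub_le (norm_nonneg x))

theorem NormedSpace.norm_list_prod_exp_sub_one_sub_sum_le (l : List 𝔸) :
    ‖(l.map exp).prod - 1 - l.sum‖ ≤
      Real.exp (l.map norm).sum - 1 - (l.map norm).sum := by
  induction l with
  | nil => simp
  | cons x l ih =>
    set P := (l.map exp).prod
    set b := (l.map norm).sum
    have hsum : ‖l.sum‖ ≤ b := List.le_sum_of_subadditive norm norm_zero.le norm_add_le l
    have hP : ‖P - 1‖ ≤ Real.exp b - 1 := by
      calc ‖P - 1‖ = ‖(P - 1 - l.sum) + l.sum‖ := by rw [sub_add_cancel]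
        _ ≤ ‖P - 1 - l.sum‖ + ‖l.sum‖ := norm_add_le _ _
        _ ≤ Real.exp b - 1 := by linarith
    have hb : 0 ≤ Real.exp b - 1 := hP.trans' (norm_nonneg _)
    simp only [List.map_cons, List.prod_cons, List.sum_cons]
    -- the same splitting of `eᵃ eᵇ - 1 - (a + b)` is an identity for the scalar majorants
    calc ‖exp x * P - 1 - (x + l.sum)‖
        = ‖(exp x - 1) * (P - 1) + (exp x - 1 - x) + (P - 1 - l.sum)‖ := by
          congr 1; noncomm_ring
      _ ≤ ‖exp x - 1‖ * ‖P - 1‖ + ‖exp x - 1 - x‖ + ‖P - 1 - l.sum‖ :=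
          norm_add₃_le.trans (by gcongr; exact norm_mul_le _ _)
      _ ≤ (Real.exp ‖x‖ - 1) * (Real.exp b - 1) + (Real.exp ‖x‖ - 1 - ‖x‖)
          + (Real.exp b - 1 - b) := by
          gcongr
          · exact (norm_nonneg _).trans (norm_exp_sub_one_le x)
          · exact norm_exp_sub_one_le x
          · exact norm_exp_sub_one_sub_le x
      _ = Real.exp (‖x‖ + b) - 1 - (‖x‖ + b) := by rw [Real.exp_add]; ring

theorem NormedSpace.norm_exp_list_sum_sub_list_prod_exp_le (l : List 𝔸) :
    ‖exp l.sum - (l.map exp).prod‖ ≤ (l.map norm).sum ^ 2 * Real.exp (l.map norm).sum := by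
  set s := (l.map norm).sum
  have hsum : ‖l.sum‖ ≤ s := List.le_sum_of_subadditive norm norm_zero.le norm_add_le l
  have hexp : ‖exp l.sum - 1 - l.sum‖ ≤ s ^ 2 / 2 * Real.exp s :=
    (norm_exp_sub_one_sub_le_sq_mul_exp _).trans (by gcongr)
  have hprod : ‖(l.map exp).prod - 1 - l.sum‖ ≤ s ^ 2 / 2 * Real.exp s :=
    (norm_list_prod_exp_sub_one_sub_sum_le l).trans
      (Real.exp_sub_one_sub_le ((norm_nonneg _).trans hsum))
  calc ‖exp l.sum - (l.map exp).prod‖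
      = ‖(exp l.sum - 1 - l.sum) - ((l.map exp).prod - 1 - l.sum)‖ := by congr 1; abel
    _ ≤ ‖exp l.sum - 1 - l.sum‖ + ‖(l.map exp).prod - 1 - l.sum‖ := norm_sub_le _ _
    _ ≤ s ^ 2 * Real.exp s := by linarith

end BanachAlgebra

theorem norm_le_one_of_mem_unitary {𝔸 : Type*} [NormedRing 𝔸] [StarRing 𝔸] [CStarRing 𝔸]
    {u : 𝔸} (hu : u ∈ unitary 𝔸) : ‖u‖ ≤ 1 := by
  rcases subsingleton_or_nontrivial 𝔸 with h | h
  · simp [Subsingleton.elim u 0]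
  · exact (CStarRing.norm_of_mem_unitary hu).le

section Trotter

variable {𝔸 : Type*} [NormedRing 𝔸] [NormedAlgebra ℂ 𝔸] [CompleteSpace 𝔸] {L : ℕ}

noncomputable def trotterProduct (z : ℂ) (H : Fin L → 𝔸) : 𝔸 :=
  ((List.finRange L).map fun j => exp (z • H j)).prod

theorem norm_exp_smul_sum_sub_trotterProduct_le (z : ℂ) {H : Fin L → 𝔸} {c : ℝ}
    (hc : ∀ j, ‖H j‖ ≤ c) :
    ‖exp (z • ∑ j, H j) - trotterProduct z H‖ ≤
      (L * (‖z‖ * c)) ^ 2 * Real.exp (L * (‖z‖ * c)) := by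
  let +nondep : NormedAlgebra ℚ 𝔸 := .restrictScalars ℚ ℂ 𝔸
  set l := (List.finRange L).map fun j => z • H j
  have hsum : z • ∑ j, H j = l.sum := by rw [Finset.smul_sum, Fin.sum_univ_def]
  have hprod : trotterProduct z H = (l.map exp).prod := by
    rw [trotterProduct, List.map_map]; rfl
  have hnorms : (l.map norm).sum ≤ L * (‖z‖ * c) := by
    have h := List.sum_le_card_nsmul (l.map norm) (‖z‖ * c) <| by
      simp only [l, List.map_map, List.mem_map, forall_exists_index, and_imp]
      rintro _ j - rfl
      simpa [norm_smul] using mul_le_mul_of_nonneg_left (hc j) (norm_nonneg z)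
    simpa [l] using h
  have hnonneg : 0 ≤ (l.map norm).sum := List.sum_nonneg (by simp)
  rw [hsum, hprod]
  exact (norm_exp_list_sum_sub_list_prod_exp_le l).trans (by gcongr)

variable [StarRing 𝔸] [CStarRing 𝔸] [StarModule ℂ 𝔸]

theorem IsSelfAdjoint.exp_smul_mem_unitary {a : 𝔸} (ha : IsSelfAdjoint a) {z : ℂ}
    (hz : z.re = 0) : NormedSpace.exp (z • a) ∈ unitary 𝔸 := by
  let +nondep : NormedAlgebra ℚ 𝔸 := .restrictScalars ℚ ℂ 𝔸
  refine exp_mem_unitary_of_mem_skewAdjoint (ha.smul_mem_skewAdjoint ?_)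
  simp [skewAdjoint.mem_iff, Complex.ext_iff, hz]

theorem trotterProduct_mem_unitary {z : ℂ} (hz : z.re = 0) {H : Fin L → 𝔸}
    (hH : ∀ j, IsSelfAdjoint (H j)) : trotterProduct z H ∈ unitary 𝔸 := by
  refine Submonoid.list_prod_mem _ fun u hu => ?_
  obtain ⟨j, -, rfl⟩ := List.mem_map.1 hu
  exact (hH j).exp_smul_mem_unitary hz

theorem norm_exp_smul_sum_sub_trotterProduct_pow_le {z : ℂ} (hz : z.re = 0) {H : Fin L → 𝔸}
    (hH : ∀ j, IsSelfAdjoint (H j)) {c : ℝ} (hc : ∀ j, ‖H j‖ ≤ c) (r : ℕ) :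
    ‖exp ((r * z) • ∑ j, H j) - trotterProduct z H ^ r‖ ≤
      r * ((L * (‖z‖ * c)) ^ 2 * Real.exp (L * (‖z‖ * c))) := by
  let +nondep : NormedAlgebra ℚ 𝔸 := .restrictScalars ℚ ℂ 𝔸
  rw [mul_smul, Nat.cast_smul_eq_nsmul, NormedSpace.exp_nsmul]
  refine (norm_pow_sub_pow_le ?_ ?_ r).trans ?_
  · exact norm_le_one_of_mem_unitary
      ((isSelfAdjoint_sum _ fun j _ => hH j).exp_smul_mem_unitary hz)
  · exact norm_le_one_of_mem_unitary (trotterProduct_mem_unitary hz hH)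
  · gcongr
    exact norm_exp_smul_sum_sub_trotterProduct_le z hc

end Trotter

theorem ContinuousLinearMap.norm_inner_map_self_sub_inner_map_self_le {𝕜 E : Type*} [RCLike 𝕜]
    [NormedAddCommGroup E] [InnerProductSpace 𝕜 E] (T : E →L[𝕜] E) (u v : E) :
    ‖inner 𝕜 u (T u) - inner 𝕜 v (T v)‖ ≤ ‖T‖ * (‖u‖ + ‖v‖) * ‖u - v‖ := by
  have hsplit : inner 𝕜 u (T u) - inner 𝕜 v (T v) =
      inner 𝕜 u (T (u - v)) + inner 𝕜 (u - v) (T v) := by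
    simp only [map_sub, inner_sub_left, inner_sub_right]; ring
  rw [hsplit]
  calc _ ≤ ‖u‖ * (‖T‖ * ‖u - v‖) + ‖u - v‖ * (‖T‖ * ‖v‖) :=
        (norm_add_le _ _).trans <| add_le_add
          ((norm_inner_le_norm _ _).trans (by gcongr; exact T.le_opNorm _))
          ((norm_inner_le_norm _ _).trans (by gcongr; exact T.le_opNorm _))
    _ = ‖T‖ * (‖u‖ + ‖v‖) * ‖u - v‖ := by ring

namespace Matrix

variable {n 𝕜 : Type*} [Fintype n] [DecidableEq n] [RCLike 𝕜]

open scoped MatrixOrder in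
theorem PosSemidef.norm_le_one {M : Matrix n n ℂ} (hM₀ : M.PosSemidef)
    (hM₁ : (1 - M).PosSemidef) : ‖M‖ ≤ 1 :=
  (CStarAlgebra.norm_le_one_iff_of_nonneg M hM₀.nonneg).2 (le_iff.2 hM₁)

theorem norm_star_mulVec_dotProduct_mulVec_sub_le {M U V : Matrix n n 𝕜} (hM : ‖M‖ ≤ 1)
    (hU : ‖U‖ ≤ 1) (hV : ‖V‖ ≤ 1) {ψ : n → 𝕜} (hψ : star ψ ⬝ᵥ ψ = 1) :
    ‖star (U *ᵥ ψ) ⬝ᵥ M *ᵥ (U *ᵥ ψ) - star (V *ᵥ ψ) ⬝ᵥ M *ᵥ (V *ᵥ ψ)‖ ≤ 2 * ‖U - V‖ := by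
  set e := toEuclideanCLM (n := n) (𝕜 := 𝕜)
  set x := WithLp.toLp 2 ψ
  have hx : ‖x‖ = 1 := by
    have h : ((‖x‖ ^ 2 : ℝ) : 𝕜) = 1 := by
      rw [RCLike.ofReal_pow, ← inner_self_eq_norm_sq_to_K, EuclideanSpace.inner_toLp_toLp,
        dotProduct_comm, hψ]
    exact (pow_eq_one_iff_of_nonneg (norm_nonneg x) two_ne_zero).1 (by exact_mod_cast h)
  have hinner : ∀ A : Matrix n n 𝕜,
      star (A *ᵥ ψ) ⬝ᵥ M *ᵥ (A *ᵥ ψ) = inner 𝕜 (e A x) (e M (e A x)) := by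
    intro A
    simp [e, x, EuclideanSpace.inner_toLp_toLp, dotProduct_comm]
  have hmap : ∀ A : Matrix n n 𝕜, ‖e A x‖ ≤ ‖A‖ := fun A => by
    simpa [hx, e, ← cstar_norm_def] using (e A).le_opNorm x
  rw [hinner, hinner]
  calc _ ≤ ‖e M‖ * (‖e U x‖ + ‖e V x‖) * ‖e U x - e V x‖ :=
        (e M).norm_inner_map_self_sub_inner_map_self_le _ _
    _ = ‖M‖ * (‖e U x‖ + ‖e V x‖) * ‖e (U - V) x‖ := by rw [map_sub]; rfl
    _ ≤ 1 * (1 + 1) * ‖U - V‖ := by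
        gcongr
        · exact (hmap U).trans hU
        · exact (hmap V).trans hV
        · exact hmap _
    _ = 2 * ‖U - V‖ := by ring

end Matrix

/-- Let `Γ_1, …, Γ_L` be `d × d` complex matrices that are Hermitian and unitary, let
`η_1, …, η_L` be real, `t ∈ ℝ`, `r` a positive integer, and set
`U = exp(-it ∑_j η_j Γ_j)` and `V = (∏_j exp(-i(t/r) η_j Γ_j))^r`.  Then for every unit
vector `ψ ∈ ℂ^d` and every matrix `M` with `0 ≤ M ≤ I`, the probabilities
`P_U = ⟨Uψ, M(Uψ)⟩` and `P_V = ⟨Vψ, M(Vψ)⟩` satisfy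
`|P_U - P_V| ≤ 2 ((L|t| max_j |η_j|)²/r) exp(L max_j |η_j| |t| / r)`. -/
theorem trotter_measurement_probability_error_bound (d L : ℕ)
    (Γ : Fin L → Matrix (Fin d) (Fin d) ℂ)
    (hherm : ∀ j, (Γ j).IsHermitian) (hunit : ∀ j, Γ j * (Γ j)ᴴ = 1 ∧ (Γ j)ᴴ * Γ j = 1)
    (η : Fin L → ℝ) (t : ℝ) (r : ℕ) (hr : 0 < r)
    (U V : Matrix (Fin d) (Fin d) ℂ)
    (hUdef : U = NormedSpace.exp ((-(Complex.I * (t : ℂ))) • ∑ j, (η j : ℂ) • Γ j))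
    (hVdef : V = (((List.finRange L).map (fun j =>
        NormedSpace.exp ((-(Complex.I * ((t : ℂ) / (r : ℂ)))) • ((η j : ℂ) • Γ j)))).prod) ^ r)
    (ψ : Fin d → ℂ) (hψ : star ψ ⬝ᵥ ψ = 1)
    (M : Matrix (Fin d) (Fin d) ℂ) (hM₀ : M.PosSemidef) (hM₁ : (1 - M).PosSemidef) :
    ‖star (U.mulVec ψ) ⬝ᵥ M.mulVec (U.mulVec ψ) -
        star (V.mulVec ψ) ⬝ᵥ M.mulVec (V.mulVec ψ)‖ ≤
      2 * (((L * |t| * ⨆ j : Fin L, |η j|) ^ 2) / r) *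
        Real.exp (L * (⨆ j : Fin L, |η j|) * |t| / r) := by
  set c := ⨆ j : Fin L, |η j|
  set z : ℂ := -(Complex.I * ((t : ℂ) / (r : ℂ)))
  have hz : z.re = 0 := by simp [z]
  have hV : V = trotterProduct z (fun j => (η j : ℂ) • Γ j) ^ r := hVdef
  have hU : U = exp ((r * z) • ∑ j, (η j : ℂ) • Γ j) := by
    have : (r : ℂ) ≠ 0 := by exact_mod_cast hr.ne'
    rw [hUdef]; congr 2; simp only [z]; field_simp
  have hH : ∀ j, IsSelfAdjoint ((η j : ℂ) • Γ j) :=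
    fun j => .smul (Complex.conj_ofReal _) (hherm j).isSelfAdjoint
  have hHc : ∀ j, ‖(η j : ℂ) • Γ j‖ ≤ c := fun j => by
    have hΓ := norm_le_one_of_mem_unitary (Unitary.mem_iff.2 ⟨(hunit j).2, (hunit j).1⟩)
    rw [norm_smul, Complex.norm_real, Real.norm_eq_abs]
    exact (mul_le_of_le_one_right (abs_nonneg _) hΓ).trans
      (le_ciSup (Set.finite_range fun j => |η j|).bddAbove j)
  have hU_mem : U ∈ unitary _ :=
    hUdef ▸ (isSelfAdjoint_sum _ fun j _ => hH j).exp_smul_mem_unitary (by simp)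
  have hV_mem : V ∈ unitary _ := hV ▸ pow_mem (trotterProduct_mem_unitary hz hH) r
  have hz_norm : ‖z‖ = |t| / r := by simp [z]
  calc _ ≤ 2 * ‖U - V‖ := norm_star_mulVec_dotProduct_mulVec_sub_le (hM₀.norm_le_one hM₁)
        (norm_le_one_of_mem_unitary hU_mem) (norm_le_one_of_mem_unitary hV_mem) hψ
    _ ≤ 2 * (r * ((L * (‖z‖ * c)) ^ 2 * Real.exp (L * (‖z‖ * c)))) := by
        rw [hU, hV]; gcongr; exact norm_exp_smul_sum_sub_trotterProduct_pow_le hz hH hHc r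
    _ = _ := by rw [hz_norm]; field_simp
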